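/- arXiv:1703.02697 — 5 statements merged into one kernel-verified Lean document; each statement's English description precedes it below -/
import Mathlib

section
/- Let E be a finite-dimensional real inner product space, Ξ = {χ_1, …, χ_s} a finite nonempty subset of E, and P the convex hull of Ξ. Define g(ρ) = min_{χ∈Ξ} ⟨χ, ρ⟩ for ρ ∈ E. Suppose there exists ρ ∈ E with g(ρ) ≥ 0, and suppose χ_o ∈ P satisfies ‖χ_o‖ ≤ ‖χ‖ for all χ ∈ P and χ_o ≠ 0. Then for every ρ ∈ E with ‖ρ‖ ≤ 1 one has g(ρ) ≤ ‖χ_o‖, and g(χ_o/‖χ_o‖) = ‖χ_o‖; that is, χ_o/‖χ_o‖ maximizes g over the closed unit ball. -/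
/-- **Duality between nearest point and maximal functional.**
Let `E` be a finite-dimensional real inner product space, `Ξ` a finite nonempty subset,
`P = convexHull ℝ Ξ`, and `g ρ = min_{χ ∈ Ξ} ⟨χ, ρ⟩`.  If `g ρ ≥ 0` for some `ρ`, and
`χo ∈ P` is a nearest point of `P` to the origin with `χo ≠ 0`, then `χo / ‖χo‖`
maximizes `g` over the closed unit ball, with maximum value `‖χo‖`. -/
theorem generic_states_stmt0
    {E : Type*} [NormedAddCommGroup E] [InnerProductSpace ℝ E] [FiniteDimensional ℝ E]
    (Ξ : Finset E) (hΞ : Ξ.Nonempty)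
    (g : E → ℝ) (hg : ∀ ρ : E, g ρ = Ξ.inf' hΞ (fun χ => (inner ℝ χ ρ : ℝ)))
    (hex : ∃ ρ : E, 0 ≤ g ρ)
    (χo : E) (hχoP : χo ∈ convexHull ℝ (Ξ : Set E))
    (hnear : ∀ χ ∈ convexHull ℝ (Ξ : Set E), ‖χo‖ ≤ ‖χ‖)
    (hχo : χo ≠ 0) :
    (∀ ρ : E, ‖ρ‖ ≤ 1 → g ρ ≤ ‖χo‖) ∧ g (‖χo‖⁻¹ • χo) = ‖χo‖ := by
  have hnorm : (0 : ℝ) < ‖χo‖ := norm_pos_iff.mpr hχo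
  set P : Set E := convexHull ℝ (Ξ : Set E) with hP
  have hconv : Convex ℝ P := convex_convexHull ℝ _
  -- variational inequality
  have : Nonempty P := ⟨⟨χo, hχoP⟩⟩
  have hinf : ‖(0 : E) - χo‖ = ⨅ w : P, ‖(0 : E) - w‖ := by
    apply le_antisymm
    · apply le_ciInf
      intro w
      simp only [zero_sub, norm_neg]
      exact hnear w w.2
    · exact ciInf_le ⟨0, fun x ⟨w, hw⟩ => hw ▸ norm_nonneg _⟩ (⟨χo, hχoP⟩ : P)
  have hvar : ∀ w ∈ P, (inner ℝ ((0:E) - χo) (w - χo) : ℝ) ≤ 0 :=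
    (norm_eq_iInf_iff_real_inner_le_zero hconv hχoP).mp hinf
  have key : ∀ χ ∈ (Ξ : Set E), ‖χo‖ ^ 2 ≤ (inner ℝ χ χo : ℝ) := by
    intro χ hχ
    have := hvar χ (subset_convexHull ℝ _ hχ)
    simp only [zero_sub, inner_neg_left, inner_sub_right] at this
    have h2 : (inner ℝ χo χo : ℝ) ≤ inner ℝ χo χ := by linarith
    rw [real_inner_self_eq_norm_sq] at h2
    rwa [real_inner_comm]
  have part1 : ∀ ρ : E, ‖ρ‖ ≤ 1 → g ρ ≤ ‖χo‖ := by
    intro ρ hρ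
    have hmem : χo ∈ {x : E | g ρ ≤ (inner ℝ x ρ : ℝ)} := by
      refine convexHull_min ?_ ?_ hχoP
      · intro χ hχ
        simp only [Set.mem_setOf_eq, hg]
        exact Finset.inf'_le _ hχ
      · intro x hx y hy a b ha hb hab
        simp only [Set.mem_setOf_eq, inner_add_left, inner_smul_left,
          RCLike.conj_to_real] at *
        have h1 : a * g ρ + b * g ρ = g ρ := by rw [← add_mul, hab, one_mul]
        linarith [mul_le_mul_of_nonneg_left hx ha, mul_le_mul_of_nonneg_left hy hb]
    calc g ρ ≤ (inner ℝ χo ρ : ℝ) := hmem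
      _ ≤ ‖χo‖ * ‖ρ‖ := real_inner_le_norm _ _
      _ ≤ ‖χo‖ * 1 := by nlinarith
      _ = ‖χo‖ := mul_one _
  refine ⟨part1, le_antisymm ?_ ?_⟩
  · apply part1
    rw [norm_smul, norm_inv, norm_norm, inv_mul_cancel₀ hnorm.ne']
  · rw [hg, Finset.le_inf'_iff]
    intro χ hχ
    rw [real_inner_smul_right]
    have h := key χ hχ
    rw [le_inv_mul_iff₀ hnorm]
    nlinarith
end

section
/- Let k be an algebraically closed field of characteristic zero, n ≥ 1 and d ≥ 1, and let f ∈ k[x_0, …, x_n] be a nonzero homogeneous polynomial of degree d. Then there exists a nonzero polynomial P in the (n+1)² matrix-entry variables such that for every matrix g ∈ GL_{n+1}(k) with P(g) ≠ 0, every monomial x^β of degree d appears with nonzero coefficient in g·f. In other words, the generic state of f with respect to the diagonal torus consists of all characters x^α with α ∈ ℤ_{≥0}^{n+1} and Σ_i α_i = d. -/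
open MvPolynomial Finset

lemma aux_coeff_sum_X_pow {k : Type*} [CommSemiring k] {σ : Type*} [Fintype σ] [DecidableEq σ]
    (β : σ →₀ ℕ) :
    MvPolynomial.coeff β ((∑ i, MvPolynomial.X i : MvPolynomial σ k) ^ (∑ i, β i)) =
      (Nat.multinomial Finset.univ ⇑β : k) := by
  rw [Finset.sum_pow_eq_sum_piAntidiag, MvPolynomial.coeff_sum]
  have key : ∀ γ ∈ Finset.piAntidiag (Finset.univ : Finset σ) (∑ i, β i),
      MvPolynomial.coeff β
        ((Nat.multinomial Finset.univ γ : MvPolynomial σ k) * ∏ i, MvPolynomial.X i ^ γ i) =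
      if γ = ⇑β then (Nat.multinomial Finset.univ γ : k) else 0 := by
    intro γ _
    have hmon : (∏ i, (MvPolynomial.X i : MvPolynomial σ k) ^ γ i) =
        MvPolynomial.monomial (Finsupp.equivFunOnFinite.symm γ) (1 : k) := by
      rw [← MvPolynomial.prod_X_pow_eq_monomial]
      refine (Finset.prod_subset (Finset.subset_univ _) ?_).symm
      intro x _ hx
      have h0 : γ x = 0 := Finsupp.notMem_support_iff.mp hx
      rw [h0, pow_zero]
    rw [hmon, show ((Nat.multinomial Finset.univ γ : MvPolynomial σ k)) =
        MvPolynomial.C ((Nat.multinomial Finset.univ γ : k)) from (map_natCast _ _).symm,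
      MvPolynomial.C_mul_monomial, MvPolynomial.coeff_monomial]
    have hiff : (Finsupp.equivFunOnFinite.symm γ = β) ↔ (γ = ⇑β) := by
      constructor
      · intro h; rw [← h]; rfl
      · intro h; subst h; exact Finsupp.equivFunOnFinite.symm_apply_apply β
    simp [hiff, mul_one]
  rw [Finset.sum_congr rfl key, Finset.sum_ite_eq' _ (⇑β)]
  rw [if_pos]
  rw [Finset.mem_piAntidiag]
  exact ⟨rfl, fun i _ => Finset.mem_univ i⟩

lemma aux_homog_scale {k : Type*} [CommSemiring k] {σ : Type*} {d : ℕ}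
    (f : MvPolynomial σ k) (hhom : f.IsHomogeneous d) (c : σ → k) (s : MvPolynomial σ k) :
    MvPolynomial.aeval (fun i => MvPolynomial.C (c i) * s) f
      = MvPolynomial.C (MvPolynomial.eval c f) * s ^ d := by
  conv_lhs => rw [f.as_sum]
  rw [map_sum, MvPolynomial.eval_eq, map_sum, Finset.sum_mul]
  refine Finset.sum_congr rfl fun α hα => ?_
  rw [MvPolynomial.aeval_monomial, MvPolynomial.algebraMap_eq]
  have hdeg : ∑ i ∈ α.support, α i = d := by
    have := hhom (MvPolynomial.mem_support_iff.mp hα)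
    simpa [Finsupp.weight, Finsupp.degree, Finsupp.linearCombination, Finsupp.sum] using this
  simp only [Finsupp.prod]
  simp_rw [mul_pow]
  rw [Finset.prod_mul_distrib, Finset.prod_pow_eq_pow_sum, hdeg]
  simp_rw [← map_pow]
  rw [← map_prod, map_mul]
  ring

lemma aux_comm {k : Type*} [CommSemiring k] {σ : Type*} [Fintype σ]
    (f : MvPolynomial σ k) (g : σ → σ → k) (β : σ →₀ ℕ) :
    MvPolynomial.eval (fun p : σ × σ => g p.1 p.2)
      (MvPolynomial.coeff β
        (MvPolynomial.aeval
          (fun i => ∑ j, MvPolynomial.C (MvPolynomial.X (j, i)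
              : MvPolynomial (σ × σ) k) * MvPolynomial.X j) f))
    = MvPolynomial.coeff β
        (MvPolynomial.aeval (fun i => ∑ j, MvPolynomial.C (g j i) * MvPolynomial.X j) f) := by
  set φ : MvPolynomial (σ × σ) k →+* k := MvPolynomial.eval (fun p : σ × σ => g p.1 p.2)
  rw [← MvPolynomial.coeff_map φ]
  congr 1
  have : (MvPolynomial.map φ).comp
      ((MvPolynomial.aeval (fun i => ∑ j, MvPolynomial.C (MvPolynomial.X (j, i)
        : MvPolynomial (σ × σ) k) * MvPolynomial.X j)).toRingHom
        : MvPolynomial σ k →+* MvPolynomial σ (MvPolynomial (σ × σ) k))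
      = (MvPolynomial.aeval (fun i => ∑ j, MvPolynomial.C (g j i)
          * MvPolynomial.X j)).toRingHom := by
    apply MvPolynomial.ringHom_ext
    · intro a
      simp [φ]
    · intro i
      simp [φ]
  exact RingHom.congr_fun this f

/-- **The generic state of a hypersurface is everything.**
Let `k` be an algebraically closed field of characteristic zero, `n ≥ 1`, `d ≥ 1`, and
`f` a nonzero homogeneous polynomial of degree `d` in `x_0, …, x_n`. Then there is a
nonzero polynomial `P` in the `(n+1)²` matrix entries such that for every
`g ∈ GL_{n+1}(k)` with `P(g) ≠ 0`, every monomial `x^β` of degree `d` appears with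
nonzero coefficient in `g·f` (where `g·f` substitutes `x_i ↦ Σ_j g_{ji} x_j`). -/
theorem generic_states_stmt4
    {k : Type*} [Field k] [IsAlgClosed k] [CharZero k]
    (n d : ℕ) (hn : 1 ≤ n) (hd : 1 ≤ d)
    (f : MvPolynomial (Fin (n + 1)) k) (hf : f ≠ 0)
    (hhom : f.IsHomogeneous d) :
    ∃ P : MvPolynomial (Fin (n + 1) × Fin (n + 1)) k, P ≠ 0 ∧
      ∀ g : Matrix (Fin (n + 1)) (Fin (n + 1)) k, IsUnit g.det →
        MvPolynomial.eval (fun p => g p.1 p.2) P ≠ 0 →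
        ∀ β : Fin (n + 1) →₀ ℕ, (∑ i, β i) = d →
          MvPolynomial.coeff β
            (MvPolynomial.aeval
              (fun i => ∑ j, MvPolynomial.C (g j i) * MvPolynomial.X j) f) ≠ 0 := by
  classical
  -- find a point where f does not vanish
  obtain ⟨c, hc⟩ : ∃ c : Fin (n + 1) → k, MvPolynomial.eval c f ≠ 0 := by
    by_contra h
    push_neg at h
    exact hf (MvPolynomial.funext (fun x => by simp [h x]))
  -- the generic coefficient polynomials are nonzero
  have hQ : ∀ β : Fin (n + 1) →₀ ℕ, (∑ i, β i) = d →
      MvPolynomial.coeff β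
        (MvPolynomial.aeval
          (fun i => ∑ j, MvPolynomial.C (MvPolynomial.X (j, i)
              : MvPolynomial (Fin (n + 1) × Fin (n + 1)) k) * MvPolynomial.X j) f) ≠ 0 := by
    intro β hβ h0
    have hev := aux_comm f (fun _ i => c i) β
    rw [h0, map_zero] at hev
    have hfun : (fun i : Fin (n + 1) => ∑ j, MvPolynomial.C (c i)
          * (MvPolynomial.X j : MvPolynomial (Fin (n + 1)) k))
        = fun i => MvPolynomial.C (c i) * ∑ j, MvPolynomial.X j := by
      funext i; rw [Finset.mul_sum]
    rw [hfun, aux_homog_scale f hhom c, MvPolynomial.coeff_C_mul, ← hβ,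
      aux_coeff_sum_X_pow] at hev
    have hm : (Nat.multinomial Finset.univ ⇑β : k) ≠ 0 := by
      exact_mod_cast (Nat.multinomial_pos _ _).ne'
    rcases mul_eq_zero.mp hev.symm with h | h
    · exact hc h
    · exact hm h
  refine ⟨∏ γ ∈ Finset.piAntidiag (Finset.univ : Finset (Fin (n + 1))) d,
      MvPolynomial.coeff (Finsupp.equivFunOnFinite.symm γ)
        (MvPolynomial.aeval
          (fun i => ∑ j, MvPolynomial.C (MvPolynomial.X (j, i)
              : MvPolynomial (Fin (n + 1) × Fin (n + 1)) k) * MvPolynomial.X j) f), ?_, ?_⟩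
  · rw [Finset.prod_ne_zero_iff]
    intro γ hγ
    obtain ⟨hsum, -⟩ := Finset.mem_piAntidiag.mp hγ
    exact hQ _ (by simpa using hsum)
  · intro g _ hP β hβ
    have hmem : ⇑β ∈ Finset.piAntidiag (Finset.univ : Finset (Fin (n + 1))) d :=
      Finset.mem_piAntidiag.mpr ⟨hβ, fun i _ => Finset.mem_univ i⟩
    rw [map_prod] at hP
    have hfac : MvPolynomial.eval (fun p : Fin (n + 1) × Fin (n + 1) => g p.1 p.2)
        (MvPolynomial.coeff β
          (MvPolynomial.aeval
            (fun i => ∑ j, MvPolynomial.C (MvPolynomial.X (j, i)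
                : MvPolynomial (Fin (n + 1) × Fin (n + 1)) k) * MvPolynomial.X j) f)) ≠ 0 := by
      intro h0
      apply hP
      refine Finset.prod_eq_zero hmem ?_
      rw [Finsupp.equivFunOnFinite_symm_coe β, h0]
    rw [← aux_comm f (fun j i => g j i) β]
    exact hfac
end

section
/- Let k be an algebraically closed field of characteristic zero and f ∈ k[x_0, …, x_n] a nonzero homogeneous polynomial of degree d ≥ 1. Then there exists a nonzero polynomial P in the (n+1)² matrix-entry variables such that for every g ∈ GL_{n+1}(k) with P(g) ≠ 0 and every nonzero r ∈ ℤ^{n+1} with Σ_{i=0}^n r_i = 0, there exists a multi-index α ∈ ℤ_{≥0}^{n+1} with Σ_i α_i = d such that the coefficient of x^α in g·f is nonzero and Σ_{i=0}^n α_i r_i < 0. That is, every nonzero degree-d form is generically stable with respect to the diagonal maximal torus of SL_{n+1}. -/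
open MvPolynomial

/-- Coefficient extraction via the one-variable specialization. -/
lemma aux_coeff_single {k : Type*} [CommRing k] {n : ℕ} (i : Fin (n+1)) (d : ℕ)
    (h : MvPolynomial (Fin (n+1)) k) :
    (MvPolynomial.aeval
        (fun j => if j = i then (Polynomial.X : Polynomial k) else 0) h).coeff d
      = MvPolynomial.coeff (Finsupp.single i d) h := by
  induction h using MvPolynomial.induction_on' with
  | monomial α c =>
      rw [MvPolynomial.aeval_monomial, MvPolynomial.coeff_monomial]
      by_cases hα : α = Finsupp.single i d
      · subst hα
        simp only [if_pos rfl]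
        rw [Finsupp.prod_single_index (by simp)]
        simp [Polynomial.coeff_C_mul, Polynomial.coeff_X_pow]
      · rw [if_neg hα]
        by_cases hs : α.support ⊆ {i}
        · have hα' := Finsupp.support_subset_singleton.mp hs
          rw [hα']
          rw [Finsupp.prod_single_index (by simp)]
          have : α i ≠ d := by
            intro hcon; exact hα (by rw [hα', hcon])
          simp [Polynomial.coeff_C_mul, Polynomial.coeff_X_pow, Ne.symm this]
        · obtain ⟨j, hj, hji⟩ : ∃ j ∈ α.support, j ≠ i := by
            by_contra hcon
            push_neg at hcon
            exact hs (fun j hj => Finset.mem_singleton.mpr (hcon j hj))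
          have : (Finsupp.prod α fun j e =>
              (if j = i then (Polynomial.X : Polynomial k) else 0) ^ e) = 0 := by
            apply Finset.prod_eq_zero hj
            show ((if j = i then (Polynomial.X : Polynomial k) else 0) ^ α j) = 0
            rw [if_neg hji]
            exact zero_pow (Finsupp.mem_support_iff.mp hj)
          rw [this, mul_zero, Polynomial.coeff_zero]
  | add p q hp hq =>
      simp [map_add, Polynomial.coeff_add, MvPolynomial.coeff_add, hp, hq]

/-- Evaluating a homogeneous polynomial at `c i • X`. -/
lemma aux_aeval_smul {k : Type*} [CommRing k] {n : ℕ} {d : ℕ}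
    (f : MvPolynomial (Fin (n+1)) k) (hhom : f.IsHomogeneous d) (c : Fin (n+1) → k) :
    MvPolynomial.aeval (fun j => Polynomial.C (c j) * Polynomial.X) f
      = Polynomial.C (MvPolynomial.eval c f) * Polynomial.X ^ d := by
  conv_lhs => rw [f.as_sum]
  rw [map_sum, MvPolynomial.eval_eq', map_sum, Finset.sum_mul]
  refine Finset.sum_congr rfl ?_
  intro α hα
  rw [MvPolynomial.aeval_monomial]
  have hdeg : (∑ j, α j) = d := by
    have := hhom (MvPolynomial.mem_support_iff.mp hα)
    rw [← this, Finsupp.weight_apply]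
    simp [Finsupp.sum_fintype, mul_comm]
  calc (algebraMap k (Polynomial k)) (f.coeff α) *
        (Finsupp.prod α fun j e => (Polynomial.C (c j) * Polynomial.X) ^ e)
      = Polynomial.C (f.coeff α) * (Polynomial.C (∏ j, c j ^ α j) * Polynomial.X ^ d) := by
        rw [Finsupp.prod_fintype _ _ (by simp)]
        simp only [mul_pow, ← Polynomial.C_pow]
        rw [Finset.prod_mul_distrib, ← map_prod, Finset.prod_pow_eq_pow_sum, hdeg]
        rfl
    _ = Polynomial.C (f.coeff α * ∏ j, c j ^ α j) * Polynomial.X ^ d := by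
        rw [map_mul]; ring


/-- **Generic stability of hypersurfaces with respect to the diagonal torus.**
Let `k` be an algebraically closed field of characteristic zero and `f` a nonzero
homogeneous polynomial of degree `d ≥ 1` in `x_0, …, x_n`. Then there is a nonzero
polynomial `P` in the `(n+1)²` matrix entries such that for every `g ∈ GL_{n+1}(k)` with
`P(g) ≠ 0` and every nonzero `r ∈ ℤ^{n+1}` with `Σ_i r_i = 0`, there is a multi-index `α`
with `Σ_i α_i = d` such that the coefficient of `x^α` in `g·f` is nonzero and
`Σ_i α_i r_i < 0`. -/
theorem generic_states_stmt5
    {k : Type*} [Field k] [IsAlgClosed k] [CharZero k]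
    (n d : ℕ) (hd : 1 ≤ d)
    (f : MvPolynomial (Fin (n + 1)) k) (hf : f ≠ 0)
    (hhom : f.IsHomogeneous d) :
    ∃ P : MvPolynomial (Fin (n + 1) × Fin (n + 1)) k, P ≠ 0 ∧
      ∀ g : Matrix (Fin (n + 1)) (Fin (n + 1)) k, IsUnit g.det →
        MvPolynomial.eval (fun p => g p.1 p.2) P ≠ 0 →
        ∀ r : Fin (n + 1) → ℤ, r ≠ 0 → (∑ i, r i) = 0 →
          ∃ α : Fin (n + 1) →₀ ℕ, (∑ i, α i) = d ∧
            MvPolynomial.coeff α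
              (MvPolynomial.aeval
                (fun i => ∑ j, MvPolynomial.C (g j i) * MvPolynomial.X j) f) ≠ 0 ∧
            (∑ i, (α i : ℤ) * r i) < 0 := by
  refine ⟨∏ i : Fin (n + 1), MvPolynomial.rename (Prod.mk i) f, ?_, ?_⟩
  · rw [Finset.prod_ne_zero_iff]
    intro i _
    exact fun h => hf ((map_eq_zero_iff _
      (MvPolynomial.rename_injective _ (Prod.mk_right_injective i))).mp h)
  · intro g _ hP r hr hrsum
    -- the key coefficient computation
    have key : ∀ i : Fin (n + 1),
        MvPolynomial.coeff (Finsupp.single i d)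
          (MvPolynomial.aeval
            (fun i' => ∑ j, MvPolynomial.C (g j i') * MvPolynomial.X j) f)
        = MvPolynomial.eval (fun j => g i j) f := by
      intro i
      rw [← aux_coeff_single i d]
      rw [← AlgHom.comp_apply, MvPolynomial.comp_aeval]
      have : (fun i' => MvPolynomial.aeval
          (fun j => if j = i then (Polynomial.X : Polynomial k) else 0)
          (∑ j, MvPolynomial.C (g j i') * MvPolynomial.X j))
          = fun i' => Polynomial.C (g i i') * Polynomial.X := by
        funext i'
        rw [map_sum]
        rw [Finset.sum_eq_single i]
        · simp
        · intro j _ hji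
          simp [hji]
        · simp
      rw [this, aux_aeval_smul f hhom]
      simp [Polynomial.coeff_C_mul, Polynomial.coeff_X_pow]
    -- find an index with negative weight
    obtain ⟨i, hi⟩ : ∃ i, r i < 0 := by
      by_contra hcon
      push_neg at hcon
      apply hr
      funext i
      have := (Finset.sum_eq_zero_iff_of_nonneg (fun j _ => hcon j)).mp hrsum i
        (Finset.mem_univ i)
      simpa using this
    refine ⟨Finsupp.single i d, ?_, ?_, ?_⟩
    · rw [Finset.sum_eq_single i]
      · simp
      · intro b _ hb; exact Finsupp.single_eq_of_ne' (Ne.symm hb)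
      · simp
    · rw [key i]
      intro h0
      apply hP
      rw [MvPolynomial.eval_prod]
      rw [Finset.prod_eq_zero (Finset.mem_univ i)]
      rw [MvPolynomial.eval_rename]
      exact h0
    · rw [Finset.sum_eq_single i]
      · simp only [Finsupp.single_eq_same]
        have : (0:ℤ) < d := by exact_mod_cast Nat.lt_of_lt_of_le Nat.zero_lt_one hd
        exact mul_neg_of_pos_of_neg this hi
      · intro j _ hj; simp [Finsupp.single_eq_of_ne' (Ne.symm hj)]
      · simp
end

section
/- Let k be a field of characteristic zero and f = Σ_α d_α x^α ∈ k[x_0,…,x_n] a nonzero homogeneous polynomial of degree d. For each multi-index β of degree d, the function sending an (n+1)×(n+1) matrix g = (g_{ij}) to the coefficient of x^β in g·f is a nonzero polynomial in the entries g_{ij}; explicitly, Σ_α d_α c^α_β(g) is a nonzero element of k[g_{ij}], because the polynomials c^α_β for distinct α are multi-homogeneous of pairwise distinct multi-degrees, so no cancellation occurs. -/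
open MvPolynomial Finset


lemma coeff_sum_X_pow_aux {k : Type*} [CommSemiring k] (n d : ℕ)
    (β : Fin (n+1) →₀ ℕ) (hβ : ∑ i, β i = d) :
    MvPolynomial.coeff β ((∑ j : Fin (n+1), (X j : MvPolynomial (Fin (n+1)) k)) ^ d)
      = (Nat.multinomial Finset.univ β : k) := by
  rw [Finset.sum_pow_eq_sum_piAntidiag, MvPolynomial.coeff_sum]
  have key : ∀ c : Fin (n+1) → ℕ,
      (∏ i : Fin (n+1), (X i : MvPolynomial (Fin (n+1)) k) ^ c i)
        = monomial (Finsupp.equivFunOnFinite.symm c) 1 := by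
    intro c
    rw [monic_monomial_eq, Finsupp.prod_pow]
    rfl
  have hmem : (β : Fin (n+1) → ℕ) ∈ piAntidiag (univ : Finset (Fin (n+1))) d := by
    simp [mem_piAntidiag, hβ]
  rw [Finset.sum_eq_single (β : Fin (n+1) → ℕ)]
  · rw [key, Finsupp.equivFunOnFinite_symm_coe, ← C_eq_coe_nat, coeff_C_mul,
      coeff_monomial, if_pos rfl, mul_one]
  · intro c hc hne
    rw [key, ← C_eq_coe_nat, coeff_C_mul, coeff_monomial, if_neg, mul_zero]
    intro h
    apply hne
    rw [← h]
    rfl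
  · intro h; exact absurd hmem h

lemma aeval_scaled_line {k : Type*} [CommSemiring k] (n d : ℕ)
    (f : MvPolynomial (Fin (n + 1)) k) (hhom : f.IsHomogeneous d)
    (a : Fin (n + 1) → k) :
    (MvPolynomial.aeval (fun i => MvPolynomial.C (a i) * ∑ j : Fin (n+1), X j) f
        : MvPolynomial (Fin (n+1)) k)
      = C (eval a f) * (∑ j : Fin (n+1), (X j : MvPolynomial (Fin (n+1)) k)) ^ d := by
  rw [aeval_def, eval₂_eq', eval_eq', map_sum, Finset.sum_mul]
  apply Finset.sum_congr rfl
  intro α hα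
  have hd : ∑ i, α i = d := by
    have hc : coeff α f ≠ 0 := (MvPolynomial.mem_support_iff).1 hα
    have : α.degree = d := by
      by_contra hne
      exact hc (hhom.coeff_eq_zero hne)
    rw [← this, Finsupp.degree]
    exact (Finset.sum_subset (Finset.subset_univ _)
      (fun i _ hi => Finsupp.notMem_support_iff.1 hi)).symm
  rw [map_mul, map_prod]
  simp_rw [map_pow, mul_pow, Finset.prod_mul_distrib, Finset.prod_pow_eq_pow_sum, hd,
    algebraMap_eq, mul_assoc]



/-- **No cancellation: each coefficient of `g·f` is a nonzero polynomial in the `g_{ij}`.**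
Let `k` be a field of characteristic zero and `f` a nonzero homogeneous polynomial of
degree `d` in `x_0, …, x_n`. Substituting `x_i ↦ Σ_j g_{ji} x_j` with universal
coefficients `g_{ij}` (variables of `ℤ[g_{ij}]`, here realized over `k`), for every
multi-index `β` of degree `d` the coefficient of `x^β` in `g·f`, namely
`Σ_α d_α c^α_β ∈ k[g_{ij}]`, is nonzero. -/
theorem generic_states_stmt7
    {k : Type*} [Field k] [CharZero k]
    (n d : ℕ) (f : MvPolynomial (Fin (n + 1)) k) (hf : f ≠ 0)
    (hhom : f.IsHomogeneous d)
    (β : Fin (n + 1) →₀ ℕ) (hβ : (∑ i, β i) = d) :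
    MvPolynomial.coeff β
      (MvPolynomial.aeval
        (fun i => ∑ j : Fin (n + 1),
          MvPolynomial.C (MvPolynomial.X (j, i) :
              MvPolynomial (Fin (n + 1) × Fin (n + 1)) k) *
            MvPolynomial.X j)
        f :
        MvPolynomial (Fin (n + 1)) (MvPolynomial (Fin (n + 1) × Fin (n + 1)) k)) ≠ 0 := by
  obtain ⟨a, ha⟩ : ∃ a : Fin (n+1) → k, eval a f ≠ 0 := by
    by_contra h
    push_neg at h
    exact hf (MvPolynomial.funext fun x => by simp [h x])
  set ψ : MvPolynomial (Fin (n + 1) × Fin (n + 1)) k →+* k :=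
    (eval fun p : Fin (n+1) × Fin (n+1) => a p.2) with hψ
  intro h0
  have h1 : ψ (MvPolynomial.coeff β
      (MvPolynomial.aeval
        (fun i => ∑ j : Fin (n + 1),
          MvPolynomial.C (MvPolynomial.X (j, i) :
              MvPolynomial (Fin (n + 1) × Fin (n + 1)) k) *
            MvPolynomial.X j) f)) = 0 := by rw [h0, map_zero]
  rw [← MvPolynomial.coeff_map] at h1
  have hmap : MvPolynomial.map ψ
      (MvPolynomial.aeval
        (fun i => ∑ j : Fin (n + 1),
          MvPolynomial.C (MvPolynomial.X (j, i) :
              MvPolynomial (Fin (n + 1) × Fin (n + 1)) k) *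
            MvPolynomial.X j) f)
      = MvPolynomial.aeval (fun i => MvPolynomial.C (a i) * ∑ j : Fin (n+1), X j) f := by
    rw [MvPolynomial.map_aeval, aeval_def, ← coe_eval₂Hom]
    apply MvPolynomial.eval₂Hom_congr ?_ ?_ rfl
    · refine RingHom.ext fun r => ?_
      simp [algebraMap_eq, hψ]
      exact (map_C _ (C r)).trans (congrArg C (eval_C r))
    · funext i
      simp [hψ, Finset.mul_sum]
  rw [hmap, aeval_scaled_line n d f hhom a, coeff_C_mul,
    coeff_sum_X_pow_aux n d β hβ] at h1
  rcases mul_eq_zero.1 h1 with h | h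
  · exact ha h
  · exact Nat.cast_ne_zero.2 (Nat.multinomial_pos _ _).ne' h
end

section
/- Let k be an algebraically closed field of characteristic zero and W ⊆ k[x_0,…,x_n]_m a linear subspace of dimension l ≥ 1 with basis f_1, …, f_l. Then there exists a nonzero polynomial P in the (n+1)² matrix-entry variables such that: (i) for all g, g' ∈ GL_{n+1}(k) with P(g) ≠ 0 and P(g') ≠ 0, and for every set B of l pairwise distinct degree-m monomials, the B-minor of the coefficient matrix of g·f_1,…,g·f_l is nonzero if and only if the B-minor of the coefficient matrix of g'·f_1,…,g'·f_l is nonzero; and (ii) for g with P(g) ≠ 0, the collection of such B with nonzero minor equals the collection of B for which there exists some g'' ∈ GL_{n+1}(k) with nonzero B-minor. Hence the state (and state polytope) of the point g·(f_1∧⋯∧f_l) with respect to the diagonal torus is the same for all such g: the generic state polytope exists. -/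
open MvPolynomial

lemma key_coeff {k : Type*} [Field k] (n : ℕ)
    (g : Matrix (Fin (n+1)) (Fin (n+1)) k) (p : MvPolynomial (Fin (n+1)) k)
    (d : Fin (n+1) →₀ ℕ) :
    MvPolynomial.eval (fun q : Fin (n+1) × Fin (n+1) => g q.1 q.2)
      (MvPolynomial.coeff d
        (MvPolynomial.aeval (fun s => ∑ t, MvPolynomial.C (MvPolynomial.X (t, s)) * MvPolynomial.X t :
          Fin (n+1) → MvPolynomial (Fin (n+1)) (MvPolynomial (Fin (n+1) × Fin (n+1)) k)) p))
    = MvPolynomial.coeff d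
        (MvPolynomial.aeval (fun s => ∑ t, MvPolynomial.C (g t s) * MvPolynomial.X t) p) := by
  have h : (MvPolynomial.mapAlgHom
        (MvPolynomial.aeval (fun q : Fin (n+1) × Fin (n+1) => g q.1 q.2) :
          MvPolynomial (Fin (n+1) × Fin (n+1)) k →ₐ[k] k)).comp
      (MvPolynomial.aeval (fun s => ∑ t, MvPolynomial.C (MvPolynomial.X (t, s)) * MvPolynomial.X t :
          Fin (n+1) → MvPolynomial (Fin (n+1)) (MvPolynomial (Fin (n+1) × Fin (n+1)) k)))
      = MvPolynomial.aeval (fun s => ∑ t, MvPolynomial.C (g t s) * MvPolynomial.X t) := by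
    apply MvPolynomial.algHom_ext
    intro s
    simp [MvPolynomial.mapAlgHom_apply]
  have h2 := congrArg (MvPolynomial.coeff d) (DFunLike.congr_fun h p)
  rw [← h2]
  simp only [AlgHom.coe_comp, Function.comp_apply, MvPolynomial.mapAlgHom, AlgHom.coe_mk,
    MvPolynomial.coeff_map]
  rfl

/-- **Existence of the generic state polytope for Hilbert/wedge points.**
Let `k` be an algebraically closed field of characteristic zero and `W ⊆ k[x_0,…,x_n]_m`
a subspace of dimension `l ≥ 1` with basis `f_1, …, f_l` of homogeneous forms of degree
`m`. Then there is a nonzero polynomial `P` in the `(n+1)²` matrix entries such that: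
(i) for all `g, g' ∈ GL_{n+1}(k)` with `P(g) ≠ 0 ≠ P(g')` and every set `B` of `l`
pairwise distinct degree-`m` monomials, the `B`-minor of the coefficient matrix of
`g·f_1,…,g·f_l` is nonzero iff the `B`-minor for `g'` is nonzero; and
(ii) for `g` with `P(g) ≠ 0` the `B`-minor is nonzero iff it is nonzero for *some*
`g'' ∈ GL_{n+1}(k)`. Hence the state of `g·(f_1∧⋯∧f_l)` with respect to the diagonal
torus is constant on this dense open set. -/
theorem generic_states_stmt9
    {k : Type*} [Field k] [IsAlgClosed k] [CharZero k]
    (n m l : ℕ) (hl : 1 ≤ l)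
    (f : Fin l → MvPolynomial (Fin (n + 1)) k)
    (hfhom : ∀ i, (f i).IsHomogeneous m)
    (hfli : LinearIndependent k f) :
    ∃ P : MvPolynomial (Fin (n + 1) × Fin (n + 1)) k, P ≠ 0 ∧
      (∀ g g' : Matrix (Fin (n + 1)) (Fin (n + 1)) k,
        IsUnit g.det → IsUnit g'.det →
        MvPolynomial.eval (fun p => g p.1 p.2) P ≠ 0 →
        MvPolynomial.eval (fun p => g' p.1 p.2) P ≠ 0 →
        ∀ B : Fin l → (Fin (n + 1) →₀ ℕ), Function.Injective B →
          (∀ j, (∑ i, B j i) = m) →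
          (Matrix.det (Matrix.of fun i j =>
              MvPolynomial.coeff (B j)
                (MvPolynomial.aeval
                  (fun s => ∑ t, MvPolynomial.C (g t s) * MvPolynomial.X t) (f i))) ≠ 0 ↔
           Matrix.det (Matrix.of fun i j =>
              MvPolynomial.coeff (B j)
                (MvPolynomial.aeval
                  (fun s => ∑ t, MvPolynomial.C (g' t s) * MvPolynomial.X t) (f i))) ≠ 0)) ∧
      (∀ g : Matrix (Fin (n + 1)) (Fin (n + 1)) k, IsUnit g.det →
        MvPolynomial.eval (fun p => g p.1 p.2) P ≠ 0 →
        ∀ B : Fin l → (Fin (n + 1) →₀ ℕ), Function.Injective B →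
          (∀ j, (∑ i, B j i) = m) →
          (Matrix.det (Matrix.of fun i j =>
              MvPolynomial.coeff (B j)
                (MvPolynomial.aeval
                  (fun s => ∑ t, MvPolynomial.C (g t s) * MvPolynomial.X t) (f i))) ≠ 0 ↔
           ∃ g'' : Matrix (Fin (n + 1)) (Fin (n + 1)) k, IsUnit g''.det ∧
             Matrix.det (Matrix.of fun i j =>
              MvPolynomial.coeff (B j)
                (MvPolynomial.aeval
                  (fun s => ∑ t, MvPolynomial.C (g'' t s) * MvPolynomial.X t) (f i))) ≠ 0)) := by
  classical
  -- generic minor polynomial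
  set Q : (Fin l → (Fin (n+1) →₀ ℕ)) → MvPolynomial (Fin (n + 1) × Fin (n + 1)) k :=
    fun B => Matrix.det (Matrix.of fun i j =>
      MvPolynomial.coeff (B j)
        (MvPolynomial.aeval (fun s => ∑ t, MvPolynomial.C (MvPolynomial.X (t, s)) * MvPolynomial.X t :
          Fin (n+1) → MvPolynomial (Fin (n+1)) (MvPolynomial (Fin (n+1) × Fin (n+1)) k)) (f i)))
    with hQ
  -- evaluation of Q at g gives the minor
  have hQeval : ∀ (g : Matrix (Fin (n+1)) (Fin (n+1)) k) (B : Fin l → (Fin (n+1) →₀ ℕ)),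
      MvPolynomial.eval (fun p : Fin (n+1) × Fin (n+1) => g p.1 p.2) (Q B)
      = Matrix.det (Matrix.of fun i j =>
          MvPolynomial.coeff (B j)
            (MvPolynomial.aeval
              (fun s => ∑ t, MvPolynomial.C (g t s) * MvPolynomial.X t) (f i))) := by
    intro g B
    rw [hQ]
    rw [RingHom.map_det]
    congr 1
    ext i j
    simp only [Matrix.map_apply, Matrix.of_apply, RingHom.coe_coe]
    exact key_coeff n g (f i) (B j)
  -- finite set of admissible B
  set S : Finset (Fin l → (Fin (n+1) →₀ ℕ)) :=
    Fintype.piFinset (fun _ => Finset.finsuppAntidiag (Finset.univ : Finset (Fin (n+1))) m) with hS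
  have hmemS : ∀ B : Fin l → (Fin (n+1) →₀ ℕ), (∀ j, (∑ i, B j i) = m) → B ∈ S := by
    intro B hB
    rw [hS, Fintype.mem_piFinset]
    intro j
    rw [Finset.mem_finsuppAntidiag]
    exact ⟨hB j, Finset.subset_univ _⟩
  refine ⟨∏ B ∈ S, if Q B = 0 then 1 else Q B, ?_, ?_, ?_⟩
  · apply Finset.prod_ne_zero_iff.mpr
    intro B _
    split <;> simp_all
  · intro g g' _ _ hg hg' B hBinj hBdeg
    have hgB : Q B ≠ 0 → MvPolynomial.eval (fun p : Fin (n+1) × Fin (n+1) => g p.1 p.2) (Q B) ≠ 0 := by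
      intro hQB
      rw [map_prod] at hg
      have := Finset.prod_ne_zero_iff.mp hg B (hmemS B hBdeg)
      simpa [if_neg hQB] using this
    have hg'B : Q B ≠ 0 → MvPolynomial.eval (fun p : Fin (n+1) × Fin (n+1) => g' p.1 p.2) (Q B) ≠ 0 := by
      intro hQB
      rw [map_prod] at hg'
      have := Finset.prod_ne_zero_iff.mp hg' B (hmemS B hBdeg)
      simpa [if_neg hQB] using this
    rw [← hQeval g B, ← hQeval g' B]
    constructor
    · intro h
      exact hg'B (fun h0 => h (by rw [h0, map_zero]))
    · intro h
      exact hgB (fun h0 => h (by rw [h0, map_zero]))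
  · intro g hgdet hg B hBinj hBdeg
    constructor
    · intro h
      exact ⟨g, hgdet, h⟩
    · rintro ⟨g'', _, hg''⟩
      rw [← hQeval g'' B] at hg''
      have hQB : Q B ≠ 0 := fun h0 => hg'' (by rw [h0, map_zero])
      rw [← hQeval g B]
      rw [map_prod] at hg
      have := Finset.prod_ne_zero_iff.mp hg B (hmemS B hBdeg)
      simpa [if_neg hQB] using this
end
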